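/- arXiv:1002.4348 — 2 statements merged into one kernel-verified Lean document; each statement's English description precedes it below -/
import Mathlib

section
/- The nonzero eigenvalues of ZᵀZ, for Z a real skew-symmetric n×n matrix, occur with even multiplicity; consequently if trace(ZᵀZ) = 1 then all eigenvalues of ZᵀZ lie in [0, 1/2], i.e., 0 ≤ ZᵀZ ≤ (1/2)·I as symmetric matrices. -/
/-!
Skew-symmetry gives `ZᵀZ = -Z²`, so `Z` commutes with `ZᵀZ` and preserves each eigenspace of
`ZᵀZ`. On the `μ`-eigenspace `Z² = -μ`, and for `μ > 0` a real operator whose square is a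
negative scalar lives in even dimension, since `det(Z)² = (-μ)^dim`. With nonnegative
eigenvalues summing to `trace (ZᵀZ) = 1`, every nonzero eigenvalue `λ` occurs at least twice,
so `2λ ≤ 1`.
-/

open Matrix Module Finset

section OrderedField

variable {K V : Type*} [Field K] [LinearOrder K] [IsStrictOrderedRing K]
  [AddCommGroup V] [Module K V] [FiniteDimensional K V]

theorem even_finrank_of_mul_self_eq_smul_one (g : End K V) {c : K} (hc : c < 0)
    (h : g * g = c • 1) : Even (finrank K V) := by
  by_contra hodd
  have hdet : LinearMap.det g ^ 2 = c ^ finrank K V := by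
    rw [sq, ← map_mul, h, LinearMap.det_smul, End.one_eq_id, LinearMap.det_id, mul_one]
  have hneg : c ^ finrank K V < 0 := (Nat.not_even_iff_odd.mp hodd).pow_neg hc
  exact hneg.not_ge (hdet ▸ sq_nonneg _)

theorem Module.End.even_finrank_eigenspace_neg_mul_self (g : End K V) {μ : K} (hμ : 0 < μ) :
    Even (finrank K ((-(g * g)).eigenspace μ)) := by
  have hmaps : Set.MapsTo g ((-(g * g)).eigenspace μ) ((-(g * g)).eigenspace μ) :=
    End.mapsTo_genEigenspace_of_comm (by simp [Commute, SemiconjBy, mul_assoc]) μ 1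
  refine even_finrank_of_mul_self_eq_smul_one (g.restrict hmaps) (neg_neg_of_pos hμ) ?_
  ext ⟨x, hx⟩
  have hgg : -g (g x) = μ • x := End.mem_eigenspace_iff.mp hx
  change g (g x) = (-μ) • x
  rw [neg_smul, ← hgg, neg_neg]

end OrderedField

theorem two_nsmul_le_sum_of_even_card_fiber {ι M : Type*} [Fintype ι] [AddCommMonoid M]
    [PartialOrder M] [IsOrderedAddMonoid M] [DecidableEq M] {f : ι → M} (hf : ∀ i, 0 ≤ f i)
    (heven : ∀ m ≠ 0, Even #{i | f i = m}) (i : ι) : 2 • f i ≤ ∑ j, f j := by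
  by_cases hi : f i = 0
  · simpa [hi] using sum_nonneg fun j _ => hf j
  have hcard : 2 ≤ #{j | f j = f i} := by
    obtain ⟨k, hk⟩ := heven (f i) hi
    have hpos : 0 < #{j | f j = f i} := card_pos.mpr ⟨i, by simp⟩
    omega
  calc 2 • f i ≤ #{j | f j = f i} • f i := nsmul_le_nsmul_left (hf i) hcard
    _ = ∑ j with f j = f i, f j := by
      rw [sum_congr rfl fun j hj => (mem_filter.mp hj).2, sum_const]
    _ ≤ ∑ j, f j := sum_le_univ_sum_of_nonneg hf

namespace Matrix.IsHermitian

variable {𝕜 n : Type*} [RCLike 𝕜] [Fintype n] [DecidableEq n] {A : Matrix n n 𝕜}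

theorem card_filter_eigenvalues_eq_finrank_eigenspace (hA : A.IsHermitian) (μ : ℝ) :
    #{i | hA.eigenvalues i = μ} = finrank 𝕜 (End.eigenspace (toEuclideanLin A) μ) := by
  rw [← (isSymmetric_toEuclideanLin_iff.mpr hA).card_filter_eigenvalues_eq finrank_euclideanSpace]
  refine card_equiv (Fintype.equivOfCardEq (Fintype.card_fin _)).symm fun i => ?_
  simp only [mem_filter, mem_univ, true_and, RCLike.ofReal_inj]
  rfl

open scoped MatrixOrder ComplexOrder in
theorem posSemidef_smul_one_sub (hA : A.IsHermitian) {c : ℝ} (hc : ∀ i, hA.eigenvalues i ≤ c) :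
    (c • 1 - A).PosSemidef := by
  rw [← le_iff, ← Algebra.algebraMap_eq_smul_one,
    le_algebraMap_iff_spectrum_le hA.isSelfAdjoint, hA.spectrum_real_eq_range_eigenvalues]
  rintro _ ⟨i, rfl⟩
  exact hc i

end Matrix.IsHermitian

/-- For a real skew-symmetric matrix `Z`, the nonzero eigenvalues of `ZᵀZ`
occur with even multiplicity; consequently, if `trace (ZᵀZ) = 1` then
`0 ≤ ZᵀZ ≤ (1/2)•I` in the positive-semidefinite order. -/
theorem skew_sq_eigenvalues_even_multiplicity_and_bound {n : ℕ}
    (Z : Matrix (Fin n) (Fin n) ℝ) (hskew : Zᵀ = -Z)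
    (hherm : (Zᵀ * Z).IsHermitian) :
    (∀ μ : ℝ, μ ≠ 0 →
        Even (Finset.univ.filter (fun i => hherm.eigenvalues i = μ)).card) ∧
      ((Zᵀ * Z).trace = 1 →
        (Zᵀ * Z).PosSemidef ∧ ((1 / 2 : ℝ) • (1 : Matrix (Fin n) (Fin n) ℝ) - Zᵀ * Z).PosSemidef) := by
  have hpsd : (Zᵀ * Z).PosSemidef := by simpa using posSemidef_conjTranspose_mul_self Z
  have hnonneg := hherm.posSemidef_iff_eigenvalues_nonneg.mp hpsd
  have hlin : toEuclideanLin (Zᵀ * Z) = -(toEuclideanLin Z * toEuclideanLin Z) := by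
    rw [hskew, Matrix.neg_mul, map_neg, toLpLin_mul, End.mul_eq_comp]
  have heven : ∀ μ : ℝ, μ ≠ 0 → Even #{i | hherm.eigenvalues i = μ} := by
    intro μ hμ
    rcases hμ.lt_or_gt with hneg | hpos
    · rw [filter_false_of_mem fun i _ => (hneg.trans_le (hnonneg i)).ne', card_empty]
      exact Even.zero
    · rw [hherm.card_filter_eigenvalues_eq_finrank_eigenspace, hlin]
      exact End.even_finrank_eigenspace_neg_mul_self (toEuclideanLin Z) hpos
  refine ⟨heven, fun htr => ⟨hpsd, hherm.posSemidef_smul_one_sub fun i => ?_⟩⟩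
  have hsum : ∑ j, hherm.eigenvalues j = 1 := by simpa [hherm.trace_eq_sum_eigenvalues] using htr
  have hle := two_nsmul_le_sum_of_even_card_fiber hnonneg heven i
  rw [hsum, two_nsmul] at hle
  linarith
end

section
/- Let Z be a real skew-symmetric n×n matrix with trace(ZᵀZ) = 1 and let θ ∈ ℝ with θ² ≤ 2. Then the matrix J = I − θ·Z − θ²·ZᵀZ satisfies JᵀJ ≤ I. -/
/-!
Write `S = ZᵀZ`. Since `Z` is skew, `Z` commutes with `S = -Z²`, and expanding gives
`1 - JᵀJ = (θZ)ᵀ (1 - θ²S) (θZ)`, so it suffices that `θ²S ≤ 1`, i.e. `2‖Zy‖² ≤ tr(ZᵀZ) ‖y‖²`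
(the nonzero singular values of a skew matrix come in pairs). With `w = Zy`, which is orthogonal
to `y`, Cauchy–Schwarz for the Frobenius inner product of `Z` and `y wᵀ - w yᵀ` gives
`4‖w‖⁴ ≤ tr(ZᵀZ) · 2‖y‖²‖w‖²`.
-/

open Matrix

namespace Matrix

variable {m n R : Type*} [Fintype m] [Fintype n]

theorem trace_transpose_mul_eq_sum [CommSemiring R] (A B : Matrix m n R) :
    (Aᵀ * B).trace = ∑ p : m × n, A p.1 p.2 * B p.1 p.2 := by
  rw [Fintype.sum_prod_type, Finset.sum_comm]
  simp [trace, mul_apply]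

theorem dotProduct_transpose_mul_mulVec [CommSemiring R] (A : Matrix m n R) (x : n → R) :
    x ⬝ᵥ (Aᵀ * A) *ᵥ x = A *ᵥ x ⬝ᵥ A *ᵥ x := by
  rw [← mulVec_mulVec, dotProduct_mulVec, ← mulVec_transpose, transpose_transpose]

section Skew

variable [CommRing R] {Z : Matrix n n R}

theorem mulVec_dotProduct_of_transpose_eq_neg (hZ : Zᵀ = -Z) (x y : n → R) :
    Z *ᵥ x ⬝ᵥ y = -(x ⬝ᵥ Z *ᵥ y) := by
  rw [dotProduct_comm, dotProduct_mulVec, ← mulVec_transpose, hZ, neg_mulVec, neg_dotProduct,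
    dotProduct_comm]

theorem dotProduct_mulVec_self_of_transpose_eq_neg [NoZeroDivisors R] [CharZero R]
    (hZ : Zᵀ = -Z) (x : n → R) : x ⬝ᵥ Z *ᵥ x = 0 := by
  have h := mulVec_dotProduct_of_transpose_eq_neg hZ x x
  rw [dotProduct_comm] at h
  exact self_eq_neg.mp h

theorem one_sub_transpose_mul_eq_of_transpose_eq_neg [DecidableEq n] (hZ : Zᵀ = -Z) (θ : R) :
    1 - (1 - θ • Z - θ ^ 2 • (Zᵀ * Z))ᵀ * (1 - θ • Z - θ ^ 2 • (Zᵀ * Z)) =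
      (θ • Z)ᵀ * (1 - θ ^ 2 • (Zᵀ * Z)) * (θ • Z) := by
  simp only [transpose_sub, transpose_one, transpose_smul, transpose_mul, transpose_neg, hZ]
  noncomm_ring
  module

end Skew

section Ordered

variable [CommRing R] [LinearOrder R] [IsStrictOrderedRing R]

theorem dotProduct_self_nonneg (v : n → R) : 0 ≤ v ⬝ᵥ v :=
  Fintype.sum_nonneg fun i ↦ mul_self_nonneg (v i)

theorem trace_transpose_mul_self_nonneg (A : Matrix m n R) : 0 ≤ (Aᵀ * A).trace := by
  rw [trace_transpose_mul_eq_sum]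
  exact Fintype.sum_nonneg fun p ↦ mul_self_nonneg _

theorem sq_trace_transpose_mul_le (A B : Matrix m n R) :
    (Aᵀ * B).trace ^ 2 ≤ (Aᵀ * A).trace * (Bᵀ * B).trace := by
  simpa only [trace_transpose_mul_eq_sum, sq] using
    Finset.sum_mul_sq_le_sq_mul_sq Finset.univ (fun p : m × n ↦ A p.1 p.2) (fun p ↦ B p.1 p.2)

theorem two_mul_mulVec_dotProduct_le_of_transpose_eq_neg {Z : Matrix n n R} (hZ : Zᵀ = -Z)
    (y : n → R) : 2 * (Z *ᵥ y ⬝ᵥ Z *ᵥ y) ≤ (Zᵀ * Z).trace * (y ⬝ᵥ y) := by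
  set w := Z *ᵥ y
  have hyw : y ⬝ᵥ w = 0 := dotProduct_mulVec_self_of_transpose_eq_neg hZ y
  have hZw : Z *ᵥ w ⬝ᵥ y = -(w ⬝ᵥ w) := mulVec_dotProduct_of_transpose_eq_neg hZ w y
  have hcs := sq_trace_transpose_mul_le Z (vecMulVec y w - vecMulVec w y)
  have hZM : (Zᵀ * (vecMulVec y w - vecMulVec w y)).trace = -2 * (w ⬝ᵥ w) := by
    simp only [Matrix.mul_sub, mul_vecMulVec, trace_sub, trace_vecMulVec, hZ, neg_mulVec,
      neg_dotProduct, hZw]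
    ring
  have hMM : ((vecMulVec y w - vecMulVec w y)ᵀ * (vecMulVec y w - vecMulVec w y)).trace =
      2 * ((y ⬝ᵥ y) * (w ⬝ᵥ w)) := by
    simp only [transpose_sub, transpose_vecMulVec, Matrix.mul_sub, Matrix.sub_mul,
      vecMulVec_mul_vecMulVec, trace_sub, trace_vecMulVec, dotProduct_smul, smul_eq_mul,
      dotProduct_comm w y, hyw]
    ring
  rw [hZM, hMM] at hcs
  rcases (dotProduct_self_nonneg w).eq_or_lt with hw0 | hwpos
  · rw [← hw0, mul_zero]
    exact mul_nonneg (trace_transpose_mul_self_nonneg Z) (dotProduct_self_nonneg y)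
  · nlinarith

end Ordered

theorem posSemidef_one_sub_smul_transpose_mul_self_of_transpose_eq_neg [DecidableEq n]
    {Z : Matrix n n ℝ} (hZ : Zᵀ = -Z) {c : ℝ} (hc : c * (Zᵀ * Z).trace ≤ 2) :
    (1 - c • (Zᵀ * Z)).PosSemidef := by
  refine .of_dotProduct_mulVec_nonneg ?_ fun x ↦ ?_
  · exact isHermitian_iff_isSymm.mpr (isSymm_one.sub ((isSymm_transpose_mul_self Z).smul c))
  · have key := two_mul_mulVec_dotProduct_le_of_transpose_eq_neg hZ x
    have hW := dotProduct_self_nonneg (Z *ᵥ x)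
    have hY := dotProduct_self_nonneg x
    rw [star_trivial, sub_mulVec, one_mulVec, smul_mulVec, dotProduct_sub, dotProduct_smul,
      dotProduct_transpose_mul_mulVec, smul_eq_mul, sub_nonneg]
    rcases le_or_gt c 0 with hc0 | hc0
    · nlinarith
    · nlinarith

end Matrix

theorem truncated_rotation_is_valid_control {n : ℕ}
    (Z : Matrix (Fin n) (Fin n) ℝ) (hskew : Zᵀ = -Z)
    (htr : (Zᵀ * Z).trace = 1) (θ : ℝ) (hθ : θ ^ 2 ≤ 2) :
    (1 - ((1 : Matrix (Fin n) (Fin n) ℝ) - θ • Z - θ ^ 2 • (Zᵀ * Z))ᵀ *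
        ((1 : Matrix (Fin n) (Fin n) ℝ) - θ • Z - θ ^ 2 • (Zᵀ * Z))).PosSemidef := by
  have hθS : θ ^ 2 * (Zᵀ * Z).trace ≤ 2 := by rwa [htr, mul_one]
  rw [one_sub_transpose_mul_eq_of_transpose_eq_neg hskew, ← conjTranspose_eq_transpose_of_trivial]
  exact (posSemidef_one_sub_smul_transpose_mul_self_of_transpose_eq_neg hskew hθS)
    |>.conjTranspose_mul_mul_same _
end
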